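/- Let p and q be real numbers with p > 0, q > 0 and p ≠ q, let n be a positive integer, let u be a natural number, and let v be a real number such that v − j ≠ 0 for 0 ≤ j ≤ n−1 and u + v − j ≠ 0 for 0 ≤ j ≤ n + u − 1. Then 1/[v]_{n,p,q} = Σ_{κ=0}^{u} C_{p,q}(n+κ−1,κ) · p^{n(u−κ)} · q^{κ(v−n+1)} · [u]_{κ,p,q} / [u+v]_{n+κ,p,q}. (The sum may be extended over all κ ∈ ℕ, since [u]_{κ,p,q} = 0 for κ > u.) -/
import Mathlib


/-- The (p,q)-deformed number `[x]_{p,q} = (p^x - q^x)/(p - q)` (real powers). -/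
noncomputable def pqNum (p q x : ℝ) : ℝ := (p ^ x - q ^ x) / (p - q)

/-- The (p,q)-factorial `[n]_{p,q}! = ∏_{i=1}^n [i]_{p,q}`. -/
noncomputable def pqFac (p q : ℝ) (n : ℕ) : ℝ := ∏ i ∈ Finset.range n, pqNum p q ((i : ℝ) + 1)

/-- The κ-th order (p,q)-factorial `[x]_{κ,p,q} = ∏_{v=0}^{κ-1} [x-v]_{p,q}`. -/
noncomputable def pqFacOrd (p q x : ℝ) (j : ℕ) : ℝ := ∏ v ∈ Finset.range j, pqNum p q (x - (v : ℝ))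

/-- The (p,q)-binomial coefficient with natural upper argument m:
`C_{p,q}(m,κ) = [m]_{κ,p,q}/[κ]_{p,q}!`. -/
noncomputable def pqBinomN (p q : ℝ) (m k : ℕ) : ℝ := pqFacOrd p q (m : ℝ) k / pqFac p q k

section
variable {p q : ℝ}

lemma pqNum_zero : pqNum p q 0 = 0 := by simp [pqNum]

lemma pqNum_ne_zero (hp : 0 < p) (hq : 0 < q) (hpq : p ≠ q) {x : ℝ} (hx : x ≠ 0) : pqNum p q x ≠ 0 := by
  unfold pqNum
  have hpq' : p - q ≠ 0 := sub_ne_zero.mpr hpq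
  refine div_ne_zero (sub_ne_zero.mpr ?_) hpq'
  intro h
  rw [Real.rpow_def_of_pos hp, Real.rpow_def_of_pos hq] at h
  have h2 : Real.log p * x = Real.log q * x := Real.exp_eq_exp.mp h
  have h3 : Real.log p = Real.log q := mul_right_cancel₀ hx h2
  exact hpq (by rw [← Real.exp_log hp, ← Real.exp_log hq, h3])

lemma pqNum_add (hp : 0 < p) (hq : 0 < q) (hpq : p ≠ q) (x y : ℝ) :
    pqNum p q (x + y) = p ^ y * pqNum p q x + q ^ x * pqNum p q y := by
  unfold pqNum
  rw [Real.rpow_add hp, Real.rpow_add hq]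
  have h : p - q ≠ 0 := sub_ne_zero.mpr hpq
  field_simp
  ring

lemma pqFacOrd_zero (x : ℝ) : pqFacOrd p q x 0 = 1 := by simp [pqFacOrd]

lemma pqFacOrd_succ (x : ℝ) (j : ℕ) :
    pqFacOrd p q x (j + 1) = pqFacOrd p q x j * pqNum p q (x - j) :=
  Finset.prod_range_succ _ _

lemma pqFacOrd_succ' (x : ℝ) (j : ℕ) :
    pqFacOrd p q x (j + 1) = pqNum p q x * pqFacOrd p q (x - 1) j := by
  unfold pqFacOrd
  rw [Finset.prod_range_succ']
  rw [mul_comm]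
  congr 1
  · simp
  · exact Finset.prod_congr rfl fun i _ => by push_cast; ring_nf

lemma pqFacOrd_add (x : ℝ) (a b : ℕ) :
    pqFacOrd p q x (a + b) = pqFacOrd p q x a * pqFacOrd p q (x - a) b := by
  unfold pqFacOrd
  rw [Finset.prod_range_add]
  congr 1
  exact Finset.prod_congr rfl fun i _ => by push_cast; ring_nf

lemma pqFacOrd_ne_zero (hp : 0 < p) (hq : 0 < q) (hpq : p ≠ q) {x : ℝ} {m : ℕ}
    (h : ∀ j : ℕ, j < m → x - j ≠ 0) :
    pqFacOrd p q x m ≠ 0 := by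
  unfold pqFacOrd
  exact Finset.prod_ne_zero_iff.mpr fun i hi =>
    pqNum_ne_zero hp hq hpq (h i (Finset.mem_range.mp hi))

lemma pqFac_succ (k : ℕ) : pqFac p q (k + 1) = pqFac p q k * pqNum p q ((k : ℝ) + 1) :=
  Finset.prod_range_succ _ _

lemma pqFac_ne_zero (hp : 0 < p) (hq : 0 < q) (hpq : p ≠ q) (k : ℕ) : pqFac p q k ≠ 0 := by
  unfold pqFac
  exact Finset.prod_ne_zero_iff.mpr fun i _ =>
    pqNum_ne_zero hp hq hpq (by positivity)

lemma binom_step (hp : 0 < p) (hq : 0 < q) (hpq : p ≠ q) (n κ : ℕ) (hn : 0 < n) :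
    pqBinomN p q (n + (κ + 1) - 1) (κ + 1) * pqNum p q ((κ : ℝ) + 1)
      = pqBinomN p q (n + κ - 1) κ * pqNum p q ((n : ℝ) + κ) := by
  have h1 : n + (κ + 1) - 1 = n + κ := by omega
  rw [h1]
  unfold pqBinomN
  have h2 : pqFacOrd p q ((n + κ : ℕ) : ℝ) (κ + 1)
      = pqNum p q ((n : ℝ) + κ) * pqFacOrd p q ((n + κ - 1 : ℕ) : ℝ) κ := by
    rw [pqFacOrd_succ']
    congr 1
    · push_cast; ring_nf
    · congr 1
      have h3 : ((n + κ - 1 : ℕ) : ℝ) = (n : ℝ) + κ - 1 := by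
        have h4 : 1 ≤ n + κ := by omega
        push_cast [Nat.cast_sub h4]
        ring
      rw [h3]; push_cast; ring
  rw [h2, pqFac_succ]
  have hN : pqNum p q ((κ : ℝ) + 1) ≠ 0 := pqNum_ne_zero hp hq hpq (by positivity)
  have hF : pqFac p q κ ≠ 0 := pqFac_ne_zero hp hq hpq κ
  field_simp

lemma facOrd_nat_top_succ (hp : 0 < p) (hq : 0 < q) (hpq : p ≠ q) (u κ : ℕ) :
    pqFacOrd p q ((u : ℝ) + 1) κ =
      p ^ (κ : ℝ) * pqFacOrd p q (u : ℝ) κ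
        + q ^ ((u : ℝ) + 1 - κ) * pqNum p q (κ : ℝ) * pqFacOrd p q (u : ℝ) (κ - 1) := by
  cases κ with
  | zero => simp [pqFacOrd_zero, pqNum_zero]
  | succ j =>
    rw [pqFacOrd_succ']
    have h1 : (u : ℝ) + 1 - 1 = (u : ℝ) := by ring
    rw [h1]
    have h2 : (u : ℝ) + 1 = ((u : ℝ) - j) + ((j : ℝ) + 1) := by ring
    rw [h2, pqNum_add hp hq hpq]
    rw [pqFacOrd_succ]
    have h3 : ((j + 1 : ℕ) : ℝ) = (j : ℝ) + 1 := by push_cast; ring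
    have h4 : (j + 1) - 1 = j := by omega
    rw [h3, h4]
    rw [show (u : ℝ) - ↑j + (↑j + 1) - (↑j + 1) = (u : ℝ) - ↑j from by ring]
    ring

end

noncomputable def Gt (p q : ℝ) (n u : ℕ) (w : ℝ) (κ : ℕ) : ℝ :=
  pqBinomN p q (n + κ - 1) κ * p ^ ((n : ℝ) * ((u : ℝ) - (κ : ℝ))) * q ^ ((κ : ℝ) * w)
    * pqFacOrd p q (u : ℝ) κ * ∏ i ∈ Finset.range (u - κ), pqNum p q (w + (i : ℝ))

noncomputable def Ct (p q : ℝ) (n u : ℕ) (w : ℝ) (κ : ℕ) : ℝ :=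
  pqBinomN p q (n + κ - 1) κ * p ^ ((n : ℝ) * ((u : ℝ) + 1 - (κ : ℝ))) * q ^ ((κ : ℝ) * w)
    * q ^ ((u : ℝ) + 1 - (κ : ℝ)) * pqNum p q (κ : ℝ) * pqFacOrd p q (u : ℝ) (κ - 1)
    * ∏ i ∈ Finset.range (u + 1 - κ), pqNum p q (w + (i : ℝ))

section
variable {p q : ℝ}

lemma Ct_zero (n u : ℕ) (w : ℝ) : Ct p q n u w 0 = 0 := by
  simp [Ct, pqNum_zero]

lemma Ct_top (hp : 0 < p) (hq : 0 < q) (hpq : p ≠ q) (n u : ℕ) (w : ℝ) :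
    Ct p q n u w (u + 1) = Gt p q n (u + 1) w (u + 1) := by
  unfold Ct Gt
  have h0 : pqFacOrd p q ((u + 1 : ℕ) : ℝ) (u + 1)
      = pqNum p q ((u + 1 : ℕ) : ℝ) * pqFacOrd p q (u : ℝ) u := by
    rw [pqFacOrd_succ']
    congr 2
    push_cast; ring
  rw [h0]
  have h1 : (u + 1) - 1 = u := by omega
  rw [h1]
  have h2 : u + 1 - (u + 1) = 0 := by omega
  rw [h2]
  have e1 : (n : ℝ) * ((u : ℝ) + 1 - ((u + 1 : ℕ) : ℝ)) = 0 := by push_cast; ring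
  have e2 : (n : ℝ) * (((u + 1 : ℕ) : ℝ) - ((u + 1 : ℕ) : ℝ)) = 0 := by push_cast; ring
  have e3 : (u : ℝ) + 1 - ((u + 1 : ℕ) : ℝ) = 0 := by push_cast; ring
  rw [e1, e2, e3]
  simp only [Real.rpow_zero]
  ring

lemma Gt_step (hp : 0 < p) (hq : 0 < q) (hpq : p ≠ q) (n u κ : ℕ) (hn : 0 < n)
    (hκ : κ ≤ u) (w : ℝ) :
    Gt p q n (u + 1) w κ
      = pqNum p q (w + (n : ℝ) + (u : ℝ)) * Gt p q n u w κ
        + Ct p q n u w κ - Ct p q n u w (κ + 1) := by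
  have hC1' : pqBinomN p q (n + κ) (κ + 1) * pqNum p q ((κ : ℝ) + 1)
      = pqBinomN p q (n + κ - 1) κ
          * (p ^ (n : ℝ) * pqNum p q (κ : ℝ) + q ^ (κ : ℝ) * pqNum p q (n : ℝ)) := by
    have h := binom_step hp hq hpq n κ hn
    rw [show n + (κ + 1) - 1 = n + κ from by omega] at h
    rw [h]
    congr 1
    rw [show (n : ℝ) + (κ : ℝ) = (κ : ℝ) + (n : ℝ) from by ring, pqNum_add hp hq hpq]
  unfold Gt Ct
  have hr1 : u + 1 - κ = (u - κ) + 1 := by omega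
  have hr2 : u + 1 - (κ + 1) = u - κ := by omega
  have hr3 : (κ + 1) - 1 = κ := by omega
  have hr4 : n + (κ + 1) - 1 = n + κ := by omega
  rw [hr1, hr2, hr3, hr4]
  simp only [Finset.prod_range_succ]
  push_cast
  rw [facOrd_nat_top_succ hp hq hpq u κ]
  rw [show w + (n : ℝ) + (u : ℝ) = (w + (u : ℝ)) + (n : ℝ) from by ring,
    pqNum_add hp hq hpq (w + (u : ℝ)) (n : ℝ)]
  rw [show w + (u : ℝ) = (w + ((u - κ : ℕ) : ℝ)) + (κ : ℝ) from by
      rw [Nat.cast_sub hκ]; ring,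
    pqNum_add hp hq hpq (w + ((u - κ : ℕ) : ℝ)) (κ : ℝ)]
  rw [Real.rpow_add hq (w + ((u - κ : ℕ) : ℝ)) (κ : ℝ)]
  rw [show q ^ (w + ((u - κ : ℕ) : ℝ)) = q ^ w * q ^ ((u : ℝ) - (κ : ℝ)) from by
      rw [Nat.cast_sub hκ, Real.rpow_add hq]]
  rw [show p ^ ((n : ℝ) * ((u : ℝ) + 1 - (κ : ℝ)))
      = p ^ (n : ℝ) * p ^ ((n : ℝ) * ((u : ℝ) - (κ : ℝ))) from by
      rw [show (n : ℝ) * ((u : ℝ) + 1 - (κ : ℝ)) = (n : ℝ) + (n : ℝ) * ((u : ℝ) - (κ : ℝ)) from by ring,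
        Real.rpow_add hp]]
  rw [show ((n : ℝ) * ((u : ℝ) + 1 - ((κ : ℝ) + 1))) = (n : ℝ) * ((u : ℝ) - (κ : ℝ)) from by ring]
  rw [show (((κ : ℝ) + 1) * w) = (κ : ℝ) * w + w from by ring, Real.rpow_add hq ((κ : ℝ) * w) w]
  rw [show ((u : ℝ) + 1 - (κ : ℝ)) = ((u : ℝ) - (κ : ℝ)) + 1 from by ring,
    Real.rpow_add hq ((u : ℝ) - (κ : ℝ)) 1, Real.rpow_one]
  rw [show ((u : ℝ) + 1 - ((κ : ℝ) + 1)) = (u : ℝ) - (κ : ℝ) from by ring]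
  linear_combination
    (p ^ ((n : ℝ) * ((u : ℝ) - (κ : ℝ))) * q ^ ((κ : ℝ) * w) * q ^ w * q ^ ((u : ℝ) - (κ : ℝ))
      * pqFacOrd p q (u : ℝ) κ * ∏ i ∈ Finset.range (u - κ), pqNum p q (w + (i : ℝ))) * hC1'

end

section
variable {p q : ℝ}

lemma key_sum (hp : 0 < p) (hq : 0 < q) (hpq : p ≠ q) (n : ℕ) (hn : 0 < n) (u : ℕ) (w : ℝ) :
    (∏ i ∈ Finset.range u, pqNum p q (w + (n : ℝ) + (i : ℝ)))
      = ∑ κ ∈ Finset.range (u + 1), Gt p q n u w κ := by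
  induction u with
  | zero =>
    simp [Gt, pqBinomN, pqFacOrd, pqFac]
  | succ u ih =>
    rw [Finset.prod_range_succ, ih, Finset.sum_range_succ (f := Gt p q n (u + 1) w)]
    have h1 : ∀ κ ∈ Finset.range (u + 1),
        Gt p q n (u + 1) w κ
          = pqNum p q (w + (n : ℝ) + (u : ℝ)) * Gt p q n u w κ
            + (Ct p q n u w κ - Ct p q n u w (κ + 1)) := by
      intro κ hκ
      have h := Gt_step hp hq hpq n u κ hn (Finset.mem_range_succ_iff.mp hκ) w
      rw [h]; ring
    rw [Finset.sum_congr rfl h1, Finset.sum_add_distrib, Finset.sum_range_sub',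
      Ct_zero, Ct_top hp hq hpq, ← Finset.mul_sum]
    ring

end


/-- The finite-sum expansion of `1/[v]_{n,p,q}`. -/
theorem pq_inverse_expansion (p q : ℝ) (hp : 0 < p) (hq : 0 < q) (hpq : p ≠ q)
    (n : ℕ) (hn : 0 < n) (u : ℕ) (v : ℝ)
    (hv : ∀ j : ℕ, j ≤ n - 1 → v - (j : ℝ) ≠ 0)
    (huv : ∀ j : ℕ, j ≤ n + u - 1 → (u : ℝ) + v - (j : ℝ) ≠ 0) :
    1 / pqFacOrd p q v n =
      ∑ κ ∈ Finset.range (u + 1),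
        pqBinomN p q (n + κ - 1) κ * p ^ ((n : ℝ) * ((u : ℝ) - (κ : ℝ)))
          * q ^ ((κ : ℝ) * (v - (n : ℝ) + 1))
          * pqFacOrd p q (u : ℝ) κ / pqFacOrd p q ((u : ℝ) + v) (n + κ) := by
  set w : ℝ := v - (n : ℝ) + 1 with hw
  -- nonvanishing facts
  have hvne : pqFacOrd p q v n ≠ 0 :=
    pqFacOrd_ne_zero hp hq hpq (fun j hj => hv j (by omega))
  have hLne : pqFacOrd p q ((u : ℝ) + v) u ≠ 0 :=
    pqFacOrd_ne_zero hp hq hpq (fun j hj => huv j (by omega))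
  -- the product reindexing
  have hL : (∏ i ∈ Finset.range u, pqNum p q (w + (n : ℝ) + (i : ℝ)))
      = pqFacOrd p q ((u : ℝ) + v) u := by
    rw [← Finset.prod_range_reflect (fun i => pqNum p q (w + (n : ℝ) + (i : ℝ))) u]
    unfold pqFacOrd
    refine Finset.prod_congr rfl fun j hj => ?_
    have hj' : j < u := Finset.mem_range.mp hj
    congr 1
    have hc : ((u - 1 - j : ℕ) : ℝ) = (u : ℝ) - 1 - (j : ℝ) := by
      have h0 : (u - 1 - j : ℕ) = u - (1 + j) := by omega
      rw [h0, Nat.cast_sub (by omega)]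
      push_cast; ring
    rw [hc, hw]; ring
  -- the split of the big factorial
  have hsplit : pqFacOrd p q ((u : ℝ) + v) (n + u)
      = pqFacOrd p q ((u : ℝ) + v) u * pqFacOrd p q v n := by
    rw [show n + u = u + n from by omega, pqFacOrd_add]
    congr 2
    push_cast; ring
  have hDne : pqFacOrd p q ((u : ℝ) + v) (n + u) ≠ 0 := by
    rw [hsplit]; exact mul_ne_zero hLne hvne
  -- per-term rewriting
  have hterm : ∀ κ ∈ Finset.range (u + 1),
      pqBinomN p q (n + κ - 1) κ * p ^ ((n : ℝ) * ((u : ℝ) - (κ : ℝ)))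
          * q ^ ((κ : ℝ) * w) * pqFacOrd p q (u : ℝ) κ / pqFacOrd p q ((u : ℝ) + v) (n + κ)
        = Gt p q n u w κ / pqFacOrd p q ((u : ℝ) + v) (n + u) := by
    intro κ hκ
    have hκ' : κ ≤ u := Finset.mem_range_succ_iff.mp hκ
    have hPne : (∏ i ∈ Finset.range (u - κ), pqNum p q (w + (i : ℝ))) ≠ 0 := by
      refine Finset.prod_ne_zero_iff.mpr fun i hi => ?_
      have hi' : i < u - κ := Finset.mem_range.mp hi
      refine pqNum_ne_zero hp hq hpq ?_
      have h0 := huv (n + u - 1 - i) (by omega)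
      have hc : ((n + u - 1 - i : ℕ) : ℝ) = (n : ℝ) + u - 1 - i := by
        have h1 : (n + u - 1 - i : ℕ) = n + u - (1 + i) := by omega
        rw [h1, Nat.cast_sub (by omega)]
        push_cast; ring
      rw [hc] at h0
      intro hcontra
      apply h0
      rw [hw] at hcontra
      linarith [hcontra]
    have hQ : pqFacOrd p q ((u : ℝ) + v) (n + u)
        = pqFacOrd p q ((u : ℝ) + v) (n + κ)
            * ∏ i ∈ Finset.range (u - κ), pqNum p q (w + (i : ℝ)) := by
      rw [show n + u = (n + κ) + (u - κ) from by omega, pqFacOrd_add]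
      congr 1
      rw [← Finset.prod_range_reflect (fun i => pqNum p q (w + (i : ℝ))) (u - κ)]
      unfold pqFacOrd
      refine Finset.prod_congr rfl fun j hj => ?_
      have hj' : j < u - κ := Finset.mem_range.mp hj
      congr 1
      have hc1 : ((u - κ - 1 - j : ℕ) : ℝ) = (u : ℝ) - κ - 1 - j := by
        have h1 : (u - κ - 1 - j : ℕ) = u - (κ + 1 + j) := by omega
        rw [h1, Nat.cast_sub (by omega)]
        push_cast; ring
      have hc2 : ((n + κ : ℕ) : ℝ) = (n : ℝ) + κ := by push_cast; ring
      rw [hc1, hc2, hw]; ring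
    rw [hQ, Gt]
    rw [mul_div_mul_right _ _ hPne]
  rw [Finset.sum_congr rfl hterm, ← Finset.sum_div, ← key_sum hp hq hpq n hn u w, hL,
    hsplit]
  rw [div_mul_eq_div_div_swap, div_right_comm, div_self hLne]
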